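/- Let f ∈ F_θ(Σ_A⁺) be real-valued and let λ = λ_f, ν = ν_f, h = h_f be as in the Ruelle–Perron–Frobenius theorem (L_f h = λ h, L_f* ν = λ ν, ∫ h dν = 1, h > 0). Then min h ≥ 1 / ( e^{2 b_f/(1−θ)} · s₀^M · e^{2M |f|_∞} ), where b_f = max{1, |f|_θ}. -/

import Mathlib

open MeasureTheory Real ENNReal

namespace SFT

/-- The one-sided subshift of finite type determined by the 0-1 matrix `A`. -/
def Space {s₀ : ℕ} (A : Matrix (Fin s₀) (Fin s₀) ℕ) : Type :=
  {ξ : ℕ → Fin s₀ // ∀ i, A (ξ i) (ξ (i + 1)) = 1}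

variable {s₀ : ℕ} {A : Matrix (Fin s₀) (Fin s₀) ℕ}

instance : TopologicalSpace (Space A) :=
  inferInstanceAs (TopologicalSpace {ξ : ℕ → Fin s₀ // ∀ i, A (ξ i) (ξ (i + 1)) = 1})

noncomputable instance : MeasurableSpace (Space A) := borel _
instance : BorelSpace (Space A) := ⟨rfl⟩

/-- The shift map σ. -/
def shift (x : Space A) : Space A := ⟨fun i => x.1 (i + 1), fun i => x.2 (i + 1)⟩

/-- `var_k g` as an extended real. -/
noncomputable def evar (g : Space A → ℝ) (k : ℕ) : ℝ≥0∞ :=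
  ⨆ (ξ : Space A) (η : Space A) (_ : ∀ i ≤ k, ξ.1 i = η.1 i), ENNReal.ofReal |g ξ - g η|

/-- `|g|_θ` as an extended real. -/
noncomputable def eHolder (θ : ℝ) (g : Space A → ℝ) : ℝ≥0∞ :=
  ⨆ k : ℕ, evar g k / ENNReal.ofReal (θ ^ k)

/-- `|g|_∞` as an extended real. -/
noncomputable def eSup (g : Space A → ℝ) : ℝ≥0∞ :=
  ⨆ ξ : Space A, ENNReal.ofReal |g ξ|

/-- `|g|_θ`. -/
noncomputable def holderNorm (θ : ℝ) (g : Space A → ℝ) : ℝ := (eHolder θ g).toReal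

/-- `|g|_∞`. -/
noncomputable def supNorm (g : Space A → ℝ) : ℝ := (eSup g).toReal

/-- `‖g‖_θ = |g|_θ + |g|_∞`. -/
noncomputable def fNorm (θ : ℝ) (g : Space A → ℝ) : ℝ := holderNorm θ g + supNorm g

/-- Membership in `F_θ(Σ_A⁺)`: finiteness of `‖g‖_θ`. -/
def MemF (θ : ℝ) (g : Space A → ℝ) : Prop := eHolder θ g + eSup g < ⊤


instance shiftFiberFinite (x : Space A) : Finite {y : Space A // shift y = x} := by
  apply Finite.of_injective (fun y : {y : Space A // shift y = x} => y.1.1 0)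
  rintro ⟨y, hy⟩ ⟨z, hz⟩ h
  apply Subtype.ext
  apply Subtype.ext
  funext n
  cases n with
  | zero => exact h
  | succ i =>
    have h1 : y.1 (i + 1) = x.1 i := congrFun (congrArg Subtype.val hy) i
    have h2 : z.1 (i + 1) = x.1 i := congrFun (congrArg Subtype.val hz) i
    rw [h1, h2]

/-- The Ruelle transfer operator `(L_f g)(x) = Σ_{σ y = x} e^{f(y)} g(y)`. -/
noncomputable def transfer (f g : Space A → ℝ) (x : Space A) : ℝ :=
  ∑' y : {y : Space A // shift y = x}, Real.exp (f y.1) * g y.1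

/-- Two functions are cohomologous if they differ by a continuous coboundary. -/
def Cohomologous (u v : Space A → ℝ) : Prop :=
  ∃ w : Space A → ℝ, Continuous w ∧ ∀ x, u x = v x + w (shift x) - w x

/-- ψ is cohomologous to a constant. -/
def CohomToConst (ψ : Space A → ℝ) : Prop := ∃ c : ℝ, Cohomologous ψ fun _ => c

/-- A finite measurable partition of the space. -/
def IsPartition {k : ℕ} (P : Fin k → Set (Space A)) : Prop :=
  (∀ i, MeasurableSet (P i)) ∧ (Pairwise fun i j => Disjoint (P i) (P j)) ∧
    (⋃ i, P i) = Set.univ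

/-- Entropy of the n-th join `⋁_{j<n} σ^{-j} P` of a partition. -/
noncomputable def joinEntropy (m : Measure (Space A)) {k : ℕ} (P : Fin k → Set (Space A))
    (n : ℕ) : ℝ :=
  ∑ a : Fin n → Fin k,
    Real.negMulLog (m (⋂ j : Fin n, shift^[(j : ℕ)] ⁻¹' P (a j))).toReal

/-- Measure-theoretic (Kolmogorov–Sinai) entropy of `m` with respect to the shift. -/
noncomputable def entropy (m : Measure (Space A)) : ℝ :=
  sSup {h | ∃ k : ℕ, ∃ P : Fin k → Set (Space A), IsPartition P ∧
    h = ⨅ n : ℕ, joinEntropy m P (n + 1) / (n + 1)}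

/-- σ-invariance of a measure. -/
def IsInvariant (m : Measure (Space A)) : Prop := m.map shift = m

/-- Topological pressure via the variational principle. -/
noncomputable def pressure (g : Space A → ℝ) : ℝ :=
  sSup {r | ∃ m : Measure (Space A), IsProbabilityMeasure m ∧ IsInvariant m ∧
    r = entropy m + ∫ x, g x ∂m}

/-- `m` is an equilibrium state of `g`. -/
def IsEqm (g : Space A → ℝ) (m : Measure (Space A)) : Prop :=
  IsProbabilityMeasure m ∧ IsInvariant m ∧ entropy m + ∫ x, g x ∂m = pressure g

/-- The Ruelle–Perron–Frobenius data of `f`: an eigenvalue `lam > 0`, a probability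
eigenmeasure `ν` of the dual operator, and a positive normalised eigenfunction `h ∈ F_θ`. -/
def IsRPF (θ : ℝ) (f : Space A → ℝ) (lam : ℝ) (ν : Measure (Space A))
    (h : Space A → ℝ) : Prop :=
  0 < lam ∧ IsProbabilityMeasure ν ∧
    (∀ g : Space A → ℝ, Continuous g → ∫ x, transfer f g x ∂ν = lam * ∫ x, g x ∂ν) ∧
    MemF θ h ∧ (∀ x, 0 < h x) ∧ (∀ x, transfer f h x = lam * h x) ∧ (∫ x, h x ∂ν) = 1

/-!
Iterating the eigen-equation gives `λⁿ h(z) = ∑_{σⁿ y = z} e^{Sₙ f(y)} h(y)`. By aperiodicity,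
each preimage `y` of `z` under `σ^(m+M)` can be replaced by a preimage of `x` sharing its first
`m + 1` symbols. This replacement is at most `s₀^M`-to-one, bounded distortion changes the Birkhoff
sums by at most `|f|_θ / (1 - θ) + 2M|f|_∞`, and `h` changes by a factor tending to `1` as
`m → ∞`. Hence `h z ≤ e^{|f|_θ/(1-θ) + 2M|f|_∞} s₀^M h x`, and at a maximum point `z` of `h`
we have `h z ≥ ∫ h dν = 1`.
-/

instance : CompactSpace (Space A) := by
  have hc : IsClosed {ξ : ℕ → Fin s₀ | ∀ i, A (ξ i) (ξ (i + 1)) = 1} := by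
    rw [Set.ofPred_forall]
    refine isClosed_iInter fun i => ?_
    have : Continuous fun ξ : ℕ → Fin s₀ => (ξ i, ξ (i + 1)) :=
      (continuous_apply i).prodMk (continuous_apply (i + 1))
    exact (isClosed_discrete {p : Fin s₀ × Fin s₀ | A p.1 p.2 = 1}).preimage this
  exact isCompact_iff_compactSpace.mp hc.isCompact

lemma shift_iterate_apply (y : Space A) (n i : ℕ) : (shift^[n] y).1 i = y.1 (i + n) := by
  induction n generalizing y with
  | zero => rfl
  | succ n ih =>
    rw [Function.iterate_succ_apply, ih]
    exact congrArg y.1 (by omega)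

lemma eq_of_forall_lt_of_shift_iterate_eq {n : ℕ} {y z : Space A}
    (hpre : ∀ i < n, y.1 i = z.1 i) (htail : shift^[n] y = shift^[n] z) : y = z := by
  apply Subtype.ext
  funext i
  rcases lt_or_ge i n with hi | hi
  · exact hpre i hi
  · obtain ⟨k, rfl⟩ := Nat.exists_eq_add_of_le' hi
    simpa only [shift_iterate_apply] using congrArg (fun w : Space A => w.1 k) htail

instance (n : ℕ) (x : Space A) : Finite {y : Space A // shift^[n] y = x} :=
  Finite.of_injective (fun y (i : Fin n) => y.1.1 i) fun y z hyz =>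
    Subtype.ext <| eq_of_forall_lt_of_shift_iterate_eq (fun i hi => congrFun hyz ⟨i, hi⟩)
      (y.2.trans z.2.symm)

def cons (a : Fin s₀) (y : Space A) (ha : A a (y.1 0) = 1) : Space A :=
  ⟨fun | 0 => a | i + 1 => y.1 i, fun | 0 => ha | i + 1 => y.2 i⟩

@[simp]
lemma shift_cons (a : Fin s₀) (y : Space A) (ha : A a (y.1 0) = 1) : shift (cons a y ha) = y :=
  rfl

lemma exists_shift_iterate_eq_of_pow_pos (h01 : ∀ i j, A i j = 0 ∨ A i j = 1) {n : ℕ}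
    {a : Fin s₀} {x : Space A} (hpos : 0 < (A ^ n) a (x.1 0)) :
    ∃ y : Space A, y.1 0 = a ∧ shift^[n] y = x := by
  induction n generalizing a with
  | zero =>
    refine ⟨x, ?_, rfl⟩
    by_contra hne
    simp [Ne.symm hne] at hpos
  | succ n ih =>
    rw [pow_succ', Matrix.mul_apply] at hpos
    obtain ⟨c, -, hc⟩ := Finset.sum_pos_iff.mp hpos
    obtain ⟨hac, hcx⟩ := CanonicallyOrderedAdd.mul_pos.mp hc
    obtain ⟨y, hy0, hy⟩ := ih hcx
    have ha : A a (y.1 0) = 1 := hy0 ▸ (h01 a c).resolve_left hac.ne'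
    exact ⟨cons a y ha, rfl, by rw [Function.iterate_succ_apply, shift_cons, hy]⟩

lemma exists_shift_iterate_eq_and_agree (h01 : ∀ i j, A i j = 0 ∨ A i j = 1) {M : ℕ}
    (hap : ∀ i j, 0 < (A ^ M) i j) (x : Space A) :
    ∀ (m : ℕ) (y' : Space A), ∃ y : Space A, shift^[m + M] y = x ∧ ∀ i ≤ m, y.1 i = y'.1 i
  | 0, y' => by
    obtain ⟨y, hy0, hy⟩ := exists_shift_iterate_eq_of_pow_pos h01 (hap (y'.1 0) (x.1 0))
    refine ⟨y, by rwa [zero_add], fun i hi => ?_⟩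
    obtain rfl : i = 0 := by omega
    exact hy0
  | m + 1, y' => by
    obtain ⟨y, hy, hagree⟩ := exists_shift_iterate_eq_and_agree h01 hap x m (shift y')
    have ha : A (y'.1 0) (y.1 0) = 1 := (hagree 0 m.zero_le).symm ▸ y'.2 0
    refine ⟨cons _ y ha, ?_, ?_⟩
    · rw [show m + 1 + M = m + M + 1 by omega, Function.iterate_succ_apply, shift_cons, hy]
    · rintro (_ | i) hi
      · rfl
      · exact hagree i (by omega)

section Holder

variable {θ : ℝ} {g : Space A → ℝ}

lemma holderNorm_nonneg : 0 ≤ holderNorm θ g := ENNReal.toReal_nonneg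

lemma abs_le_supNorm (hg : MemF θ g) (ξ : Space A) : |g ξ| ≤ supNorm g := by
  have hfin : eSup g ≠ ⊤ := fun htop => by simp [MemF, htop] at hg
  have := ENNReal.toReal_mono hfin (le_iSup (fun ξ => ENNReal.ofReal |g ξ|) ξ)
  rwa [ENNReal.toReal_ofReal (abs_nonneg _)] at this

lemma abs_sub_le_holderNorm_mul_pow (hθ0 : 0 < θ) (hg : MemF θ g) {k : ℕ} {ξ η : Space A}
    (hk : ∀ i ≤ k, ξ.1 i = η.1 i) : |g ξ - g η| ≤ holderNorm θ g * θ ^ k := by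
  have hfin : eHolder θ g ≠ ⊤ := fun htop => by simp [MemF, htop] at hg
  have hvar : ENNReal.ofReal |g ξ - g η| ≤ evar g k :=
    le_iSup₂_of_le ξ η <| le_iSup (fun _ : ∀ i ≤ k, ξ.1 i = η.1 i => _) hk
  have hθk : ENNReal.ofReal (θ ^ k) ≠ 0 := by
    simp [ENNReal.ofReal_eq_zero, not_le, pow_pos hθ0]
  have hle : evar g k ≤ eHolder θ g * ENNReal.ofReal (θ ^ k) :=
    (ENNReal.div_le_iff hθk ENNReal.ofReal_ne_top).mp <|
      le_iSup (fun k => evar g k / ENNReal.ofReal (θ ^ k)) k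
  have := ENNReal.toReal_mono (by finiteness) (hvar.trans hle)
  rwa [ENNReal.toReal_ofReal (abs_nonneg _), ENNReal.toReal_mul,
    ENNReal.toReal_ofReal (pow_pos hθ0 k).le] at this

lemma continuous_of_memF (hθ0 : 0 < θ) (hθ1 : θ < 1) (hg : MemF θ g) : Continuous g := by
  rw [continuous_iff_continuousAt]
  intro ξ
  rw [ContinuousAt, Metric.tendsto_nhds]
  intro ε hε
  have hsmall : ∀ᶠ k : ℕ in Filter.atTop, holderNorm θ g * θ ^ k < ε := by
    have := (tendsto_pow_atTop_nhds_zero_of_lt_one hθ0.le hθ1).const_mul (holderNorm θ g)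
    rw [mul_zero] at this
    exact this.eventually (gt_mem_nhds hε)
  obtain ⟨k, hk⟩ := hsmall.exists
  have hcyl : {η : Space A | ∀ i ≤ k, η.1 i = ξ.1 i} ∈ nhds ξ := by
    have : {η : Space A | ∀ i ≤ k, η.1 i = ξ.1 i}
        = ⋂ i ∈ Finset.Iic k, {η : Space A | η.1 i = ξ.1 i} := by
      ext η; simp
    rw [this]
    have hcoord (i : ℕ) : Continuous fun η : Space A => η.1 i :=
      (continuous_apply i).comp continuous_subtype_val
    exact (isOpen_biInter_finset fun i _ =>
      (hcoord i).isOpen_preimage {ξ.1 i} (isOpen_discrete _)).mem_nhds (by simp)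
  filter_upwards [hcyl] with η hη
  rw [Real.dist_eq]
  exact (abs_sub_le_holderNorm_mul_pow hθ0 hg hη).trans_lt hk

end Holder

section Birkhoff

variable {θ : ℝ} {f : Space A → ℝ}

lemma birkhoffSum_sub_le_holderNorm (hθ0 : 0 < θ) (hθ1 : θ < 1) (hf : MemF θ f) {m : ℕ}
    {y y' : Space A} (hagree : ∀ i < m, y.1 i = y'.1 i) :
    birkhoffSum shift f m y - birkhoffSum shift f m y' ≤ holderNorm θ f / (1 - θ) :=
  calc birkhoffSum shift f m y - birkhoffSum shift f m y'
      = ∑ j ∈ Finset.range m, (f (shift^[j] y) - f (shift^[j] y')) := by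
        simp only [birkhoffSum, Finset.sum_sub_distrib]
    _ ≤ ∑ j ∈ Finset.range m, holderNorm θ f * θ ^ (m - 1 - j) := by
        refine Finset.sum_le_sum fun j hj => (le_abs_self _).trans <|
          abs_sub_le_holderNorm_mul_pow hθ0 hf fun i hi => ?_
        rw [shift_iterate_apply, shift_iterate_apply]
        exact hagree _ (by have := Finset.mem_range.mp hj; omega)
    _ = holderNorm θ f * ∑ j ∈ Finset.range m, θ ^ j := by
        rw [← Finset.mul_sum, Finset.sum_range_reflect (θ ^ ·) m]
    _ ≤ holderNorm θ f * (1 / (1 - θ)) := by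
        refine mul_le_mul_of_nonneg_left ?_ holderNorm_nonneg
        have := geom_sum_Ico_le_of_lt_one (m := 0) (n := m) hθ0.le hθ1
        rwa [← Finset.range_eq_Ico, pow_zero] at this
    _ = holderNorm θ f / (1 - θ) := mul_one_div _ _

lemma birkhoffSum_sub_le_supNorm (hf : MemF θ f) (n : ℕ) (u u' : Space A) :
    birkhoffSum shift f n u - birkhoffSum shift f n u' ≤ 2 * n * supNorm f :=
  calc birkhoffSum shift f n u - birkhoffSum shift f n u'
      = ∑ j ∈ Finset.range n, (f (shift^[j] u) - f (shift^[j] u')) := by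
        simp only [birkhoffSum, Finset.sum_sub_distrib]
    _ ≤ ∑ _j ∈ Finset.range n, 2 * supNorm f := Finset.sum_le_sum fun j _ => by
        linarith [(abs_le.mp (abs_le_supNorm hf (shift^[j] u))).2,
          (abs_le.mp (abs_le_supNorm hf (shift^[j] u'))).1]
    _ = 2 * n * supNorm f := by
        rw [Finset.sum_const, Finset.card_range, nsmul_eq_mul]
        ring

lemma birkhoffSum_add_sub_le (hθ0 : 0 < θ) (hθ1 : θ < 1) (hf : MemF θ f) {m : ℕ} (n : ℕ)
    {y y' : Space A} (hagree : ∀ i < m, y.1 i = y'.1 i) :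
    birkhoffSum shift f (m + n) y - birkhoffSum shift f (m + n) y'
      ≤ holderNorm θ f / (1 - θ) + 2 * n * supNorm f := by
  rw [birkhoffSum_add, birkhoffSum_add]
  linarith [birkhoffSum_sub_le_holderNorm hθ0 hθ1 hf hagree,
    birkhoffSum_sub_le_supNorm hf n (shift^[m] y) (shift^[m] y')]

end Birkhoff

def iterateSuccFiberEquiv {X : Type*} (T : X → X) (n : ℕ) (x : X) :
    (Σ y : {y : X // T^[n] y = x}, {w : X // T w = y.1}) ≃ {w : X // T^[n + 1] w = x} where
  toFun p := ⟨p.2.1, by rw [Function.iterate_succ_apply, p.2.2, p.1.2]⟩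
  invFun w := ⟨⟨T w.1, by rw [← Function.iterate_succ_apply]; exact w.2⟩, ⟨w.1, rfl⟩⟩
  left_inv := by
    rintro ⟨⟨y, hy⟩, w, hw⟩
    obtain rfl : T w = y := hw
    rfl
  right_inv _ := rfl

lemma transfer_iterate_apply (f g : Space A → ℝ) (n : ℕ) (x : Space A) :
    (transfer f)^[n] g x
      = ∑' y : {y : Space A // shift^[n] y = x}, Real.exp (birkhoffSum shift f n y) * g y := by
  induction n generalizing g with
  | zero =>
    rw [tsum_eq_single (⟨x, rfl⟩ : {y : Space A // shift^[0] y = x})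
      fun y hy => absurd (Subtype.ext y.2) hy]
    simp
  | succ n ih =>
    rw [Function.iterate_succ_apply, ih, ← (iterateSuccFiberEquiv shift n x).tsum_eq,
      Summable.of_finite.tsum_sigma' fun _ => Summable.of_finite]
    refine tsum_congr fun y => ?_
    rw [transfer, ← tsum_mul_left]
    refine tsum_congr fun w => ?_
    simp only [iterateSuccFiberEquiv, Equiv.coe_fn_mk, birkhoffSum_succ', Real.exp_add, w.2]
    ring

lemma iterate_transfer_of_eq_mul {f h : Space A → ℝ} {lam : ℝ}
    (heig : ∀ x, transfer f h x = lam * h x) (n : ℕ) :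
    (transfer f)^[n] h = fun x => lam ^ n * h x := by
  induction n with
  | zero => simp
  | succ n ih =>
    funext x
    rw [Function.iterate_succ_apply', ih, transfer]
    simp_rw [mul_left_comm _ (lam ^ n)]
    rw [tsum_mul_left, ← transfer, heig, pow_succ]
    ring

lemma tsum_comp_le_card_mul_tsum {α β γ : Type*} [Finite β] [Finite γ] {Φ : α → β} (c : α → γ)
    (hinj : Function.Injective fun a => (Φ a, c a)) {G : β → ℝ} (hG : ∀ b, 0 ≤ G b) :
    ∑' a, G (Φ a) ≤ Nat.card γ * ∑' b, G b :=
  calc ∑' a, G (Φ a)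
      ≤ ∑' p : β × γ, G p.1 :=
        tsum_comp_le_tsum_of_inj (f := fun p : β × γ => G p.1) Summable.of_finite
          (fun p => hG p.1) hinj
    _ = ∑' (b : β) (_ : γ), G b := Summable.of_finite.tsum_prod
    _ = Nat.card γ * ∑' b, G b := by simp only [_root_.tsum_const, nsmul_eq_mul, tsum_mul_left]

lemma injective_prod_mk_of_agree {m M : ℕ} {x z : Space A}
    (Φ : {y // shift^[m + M] y = z} → {y // shift^[m + M] y = x})
    (hagree : ∀ y i, i ≤ m → (Φ y).1.1 i = y.1.1 i) :
    Function.Injective fun y => (Φ y, fun j : Fin M => y.1.1 (m + j)) := by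
  rintro ⟨y₁, hy₁⟩ ⟨y₂, hy₂⟩ heq
  obtain ⟨hΦeq, hmid⟩ := Prod.mk.inj heq
  refine Subtype.ext (eq_of_forall_lt_of_shift_iterate_eq (fun i hi => ?_) (hy₁.trans hy₂.symm))
  rcases le_or_gt i m with him | him
  · rw [← hagree _ i him, ← hagree _ i him, hΦeq]
  · obtain ⟨j, rfl⟩ := Nat.exists_eq_add_of_le him.le
    exact congrFun hmid ⟨j, by omega⟩

lemma exists_one_le_of_integral_eq_one {X : Type*} [TopologicalSpace X] [CompactSpace X]
    [MeasurableSpace X] {μ : Measure X} [IsProbabilityMeasure μ] {g : X → ℝ} (hg : Continuous g)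
    (hint : ∫ x, g x ∂μ = 1) : ∃ z, 1 ≤ g z := by
  have := nonempty_of_isProbabilityMeasure μ
  obtain ⟨z, -, hz⟩ := isCompact_univ.exists_isMaxOn Set.univ_nonempty hg.continuousOn
  refine ⟨z, ?_⟩
  have hint' : Integrable g μ := .of_integral_ne_zero (by rw [hint]; exact one_ne_zero)
  have := integral_mono hint' (integrable_const (g z)) fun y => hz (Set.mem_univ y)
  rwa [hint, integral_const, probReal_univ, one_smul] at this

section Comparison

variable {θ : ℝ} {f h : Space A → ℝ} {δ : ℝ}

lemma exp_birkhoffSum_mul_le (hθ0 : 0 < θ) (hθ1 : θ < 1) (hf : MemF θ f) (hh : MemF θ h)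
    (hδ : 0 < δ) (hδh : ∀ y, δ ≤ h y) {m : ℕ} (n : ℕ) {y y' : Space A}
    (hagree : ∀ i ≤ m, y.1 i = y'.1 i) :
    Real.exp (birkhoffSum shift f (m + n) y) * h y
      ≤ Real.exp (holderNorm θ f / (1 - θ) + 2 * n * supNorm f)
        * (1 + holderNorm θ h * θ ^ m / δ) * (Real.exp (birkhoffSum shift f (m + n) y') * h y') := by
  have hexp : Real.exp (birkhoffSum shift f (m + n) y) ≤ Real.exp (holderNorm θ f / (1 - θ)
      + 2 * n * supNorm f) * Real.exp (birkhoffSum shift f (m + n) y') := by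
    rw [← Real.exp_add, Real.exp_le_exp]
    linarith [birkhoffSum_add_sub_le hθ0 hθ1 hf n fun i hi => hagree i hi.le]
  have hratio : h y ≤ (1 + holderNorm θ h * θ ^ m / δ) * h y' := by
    have hvar := (abs_le.mp (abs_sub_le_holderNorm_mul_pow hθ0 hh hagree)).2
    have : holderNorm θ h * θ ^ m ≤ holderNorm θ h * θ ^ m / δ * h y' := by
      rw [div_mul_eq_mul_div, le_div_iff₀ hδ]
      exact mul_le_mul_of_nonneg_left (hδh y')
        (mul_nonneg holderNorm_nonneg (pow_nonneg hθ0.le m))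
    linarith
  calc Real.exp (birkhoffSum shift f (m + n) y) * h y
      ≤ (Real.exp (holderNorm θ f / (1 - θ) + 2 * n * supNorm f)
          * Real.exp (birkhoffSum shift f (m + n) y')) * ((1 + holderNorm θ h * θ ^ m / δ) * h y') :=
        mul_le_mul hexp hratio (hδ.le.trans (hδh y)) (by positivity)
    _ = _ := by ring

lemma le_mul_one_add_pow_mul_of_transfer_eq_mul (h01 : ∀ i j, A i j = 0 ∨ A i j = 1) {M : ℕ}
    (hap : ∀ i j, 0 < (A ^ M) i j) (hθ0 : 0 < θ) (hθ1 : θ < 1) (hf : MemF θ f) (hh : MemF θ h)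
    {lam : ℝ} (hlam : 0 < lam) (heig : ∀ x, transfer f h x = lam * h x)
    (hδ : 0 < δ) (hδh : ∀ y, δ ≤ h y) (x z : Space A) (m : ℕ) :
    h z ≤ Real.exp (holderNorm θ f / (1 - θ) + 2 * M * supNorm f) * s₀ ^ M
      * ((1 + holderNorm θ h * θ ^ m / δ) * h x) := by
  set K := Real.exp (holderNorm θ f / (1 - θ) + 2 * M * supNorm f)
    * (1 + holderNorm θ h * θ ^ m / δ)
  set G : Space A → ℝ := fun y => Real.exp (birkhoffSum shift f (m + M) y) * h y
  have hG : ∀ y, 0 ≤ G y := fun y => mul_nonneg (Real.exp_pos _).le (hδ.le.trans (hδh y))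
  have hsum : ∀ w, lam ^ (m + M) * h w = ∑' y : {y // shift^[m + M] y = w}, G y := fun w => by
    rw [← transfer_iterate_apply, iterate_transfer_of_eq_mul heig]
  choose Φ hΦ hagree using exists_shift_iterate_eq_and_agree h01 hap x m
  let Φ' (y : {y // shift^[m + M] y = z}) : {y // shift^[m + M] y = x} := ⟨Φ y, hΦ y⟩
  have hcount := tsum_comp_le_card_mul_tsum _ (injective_prod_mk_of_agree Φ' fun y => hagree y)
    (G := fun y => G y.1) fun y => hG y.1
  rw [Nat.card_fun, Nat.card_fin, Nat.card_fin] at hcount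
  have hmul : lam ^ (m + M) * h z
      ≤ lam ^ (m + M) * (K * (s₀ ^ M * h x)) :=
    calc lam ^ (m + M) * h z = ∑' y : {y // shift^[m + M] y = z}, G y := hsum z
      _ ≤ ∑' y : {y // shift^[m + M] y = z}, K * G (Φ' y) :=
        Summable.of_finite.tsum_le_tsum (fun y => exp_birkhoffSum_mul_le hθ0 hθ1 hf hh hδ hδh M
          fun i hi => (hagree y i hi).symm) Summable.of_finite
      _ = K * ∑' y : {y // shift^[m + M] y = z}, G (Φ' y) := tsum_mul_left
      _ ≤ K * (s₀ ^ M * ∑' y : {y // shift^[m + M] y = x}, G y) := by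
        have : 0 ≤ holderNorm θ h * θ ^ m / δ :=
          div_nonneg (mul_nonneg holderNorm_nonneg (pow_nonneg hθ0.le m)) hδ.le
        gcongr
        exact_mod_cast hcount
      _ = lam ^ (m + M) * (K * (s₀ ^ M * h x)) := by rw [← hsum]; ring
  calc h z ≤ K * (s₀ ^ M * h x) := le_of_mul_le_mul_left hmul (pow_pos hlam _)
    _ = _ := by ring

lemma le_exp_mul_pow_mul_of_transfer_eq_mul (h01 : ∀ i j, A i j = 0 ∨ A i j = 1) {M : ℕ}
    (hap : ∀ i j, 0 < (A ^ M) i j) (hθ0 : 0 < θ) (hθ1 : θ < 1) (hf : MemF θ f) (hh : MemF θ h)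
    {lam : ℝ} (hlam : 0 < lam) (heig : ∀ x, transfer f h x = lam * h x) (hpos : ∀ y, 0 < h y)
    (x z : Space A) :
    h z ≤ Real.exp (holderNorm θ f / (1 - θ) + 2 * M * supNorm f) * s₀ ^ M * h x := by
  obtain ⟨x₀, -, hx₀⟩ := isCompact_univ.exists_isMinOn ⟨x, trivial⟩
    (continuous_of_memF hθ0 hθ1 hh).continuousOn
  have hlim : Filter.Tendsto (fun m : ℕ => Real.exp (holderNorm θ f / (1 - θ) + 2 * M * supNorm f)
      * s₀ ^ M * ((1 + holderNorm θ h * θ ^ m / h x₀) * h x)) Filter.atTop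
      (nhds (Real.exp (holderNorm θ f / (1 - θ) + 2 * M * supNorm f) * s₀ ^ M
        * ((1 + holderNorm θ h * 0 / h x₀) * h x))) :=
    ((((tendsto_pow_atTop_nhds_zero_of_lt_one hθ0.le hθ1).const_mul _).div_const _).const_add 1
      |>.mul_const _).const_mul _
  simpa using ge_of_tendsto' hlim fun m => le_mul_one_add_pow_mul_of_transfer_eq_mul h01 hap
    hθ0 hθ1 hf hh hlam heig (hpos x₀) (fun y => hx₀ (Set.mem_univ y)) x z m

end Comparison

theorem statement3_general
    {s₀ M : ℕ} {A : Matrix (Fin s₀) (Fin s₀) ℕ} {θ : ℝ}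
    (h01 : ∀ i j, A i j = 0 ∨ A i j = 1)
    (hap : ∀ i j, 0 < (A ^ M) i j) (hθ0 : 0 < θ) (hθ1 : θ < 1)
    (f : Space A → ℝ) (hf : MemF θ f)
    (lam : ℝ) (ν : Measure (Space A)) (h : Space A → ℝ) (hRPF : IsRPF θ f lam ν h) :
    sInf (Set.range h) ≥
      1 / (Real.exp (2 * max 1 (holderNorm θ f) / (1 - θ)) * (s₀ : ℝ) ^ M *
        Real.exp (2 * (M : ℝ) * supNorm f)) := by
  obtain ⟨hlam, hprob, -, hh, hpos, heig, hint⟩ := hRPF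
  obtain ⟨z, hz⟩ := exists_one_le_of_integral_eq_one (continuous_of_memF hθ0 hθ1 hh) hint
  set K := Real.exp (holderNorm θ f / (1 - θ) + 2 * M * supNorm f) * s₀ ^ M with hKdef
  refine le_csInf ⟨h z, z, rfl⟩ ?_
  rintro _ ⟨x, rfl⟩
  have hK := le_exp_mul_pow_mul_of_transfer_eq_mul h01 hap hθ0 hθ1 hf hh hlam heig hpos x z
  have hKpos : 0 < K := mul_pos (Real.exp_pos _) (pow_pos (by exact_mod_cast (x.1 0).pos) M)
  have hKle : K ≤ Real.exp (2 * max 1 (holderNorm θ f) / (1 - θ)) * s₀ ^ M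
      * Real.exp (2 * M * supNorm f) := by
    rw [hKdef, Real.exp_add, mul_right_comm]
    gcongr
    linarith [le_max_left 1 (holderNorm θ f), le_max_right 1 (holderNorm θ f)]
  calc 1 / (Real.exp (2 * max 1 (holderNorm θ f) / (1 - θ)) * s₀ ^ M
        * Real.exp (2 * M * supNorm f))
      ≤ 1 / K := one_div_le_one_div_of_le hKpos hKle
    _ ≤ h x := by rw [div_le_iff₀ hKpos]; linarith

theorem statement3
    {s₀ M : ℕ} {A : Matrix (Fin s₀) (Fin s₀) ℕ} {θ : ℝ}
    (hs₀ : 2 ≤ s₀) (h01 : ∀ i j, A i j = 0 ∨ A i j = 1) (hM : 0 < M)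
    (hap : ∀ i j, 0 < (A ^ M) i j) (hθ0 : 0 < θ) (hθ1 : θ < 1)
    (f : Space A → ℝ) (hf : MemF θ f)
    (lam : ℝ) (ν : Measure (Space A)) (h : Space A → ℝ) (hRPF : IsRPF θ f lam ν h) :
    sInf (Set.range h) ≥
      1 / (Real.exp (2 * max 1 (holderNorm θ f) / (1 - θ)) * (s₀ : ℝ) ^ M *
        Real.exp (2 * (M : ℝ) * supNorm f)) :=
  statement3_general h01 hap hθ0 hθ1 f hf lam ν h hRPF

end SFT
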